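/- Let X ⊆ ℝⁿ, let x₀, …, x_{k−1} ∈ ℝⁿ, and define C_k = {x ∈ ℝⁿ : (2Qxᵢ + c)ᵀ(x − xᵢ) ≤ 0 for all i = 0, …, k−1}. Suppose x_k ∈ X ∩ C_k minimizes f over X ∩ C_k and f(x_k) ≤ f(xᵢ) for all i = 0, …, k−1. Then x_k minimizes f over X, i.e. f(x_k) ≤ f(x) for all x ∈ X. -/

import Mathlib

/-!
Convexity: `f(y) ≥ f(xᵢ) + ∇f(xᵢ)ᵀ(y - xᵢ)`, so a point `y ∈ X` removed by the cut at `xᵢ`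
satisfies `f(y) > f(xᵢ) ≥ f(x_k)`, while every point kept by all the cuts lies in `X ∩ C_k`.
-/

open Matrix

section QuadraticExpansion

variable {ι R : Type*} [Fintype ι] [CommRing R] {Q : Matrix ι ι R}

theorem Matrix.IsSymm.dotProduct_mulVec_comm (hQ : Q.IsSymm) (u v : ι → R) :
    u ⬝ᵥ (Q *ᵥ v) = v ⬝ᵥ (Q *ᵥ u) := by
  conv_lhs => rw [← hQ.eq]
  rw [dotProduct_mulVec, vecMul_transpose, dotProduct_comm]

theorem Matrix.IsSymm.quadratic_eq_linearization_add (hQ : Q.IsSymm) (c a y : ι → R) :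
    y ⬝ᵥ (Q *ᵥ y) + c ⬝ᵥ y =
      a ⬝ᵥ (Q *ᵥ a) + c ⬝ᵥ a + ((2 : R) • (Q *ᵥ a) + c) ⬝ᵥ (y - a)
        + (y - a) ⬝ᵥ (Q *ᵥ (y - a)) := by
  simp only [mulVec_sub, dotProduct_sub, sub_dotProduct, add_dotProduct, smul_dotProduct,
    smul_eq_mul]
  rw [hQ.dotProduct_mulVec_comm a y, dotProduct_comm (Q *ᵥ a) y, dotProduct_comm (Q *ᵥ a) a]
  ring

end QuadraticExpansion

section Convexity

variable {ι : Type*} [Fintype ι] {Q : Matrix ι ι ℝ}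

theorem Matrix.PosSemidef.linearization_le_quadratic (hQ : Q.PosSemidef) (c a y : ι → ℝ) :
    a ⬝ᵥ (Q *ᵥ a) + c ⬝ᵥ a + ((2 : ℝ) • (Q *ᵥ a) + c) ⬝ᵥ (y - a) ≤
      y ⬝ᵥ (Q *ᵥ y) + c ⬝ᵥ y := by
  have hsymm : Q.IsSymm := isHermitian_iff_isSymm.mp hQ.isHermitian
  have hcurv : 0 ≤ (y - a) ⬝ᵥ (Q *ᵥ (y - a)) := by
    simpa using hQ.dotProduct_mulVec_nonneg (y - a)
  rw [hsymm.quadratic_eq_linearization_add c a y]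
  linarith

theorem Matrix.PosSemidef.quadratic_lt_of_gradient_dotProduct_pos (hQ : Q.PosSemidef)
    (c a y : ι → ℝ) (hcut : 0 < ((2 : ℝ) • (Q *ᵥ a) + c) ⬝ᵥ (y - a)) :
    a ⬝ᵥ (Q *ᵥ a) + c ⬝ᵥ a < y ⬝ᵥ (Q *ᵥ y) + c ⬝ᵥ y := by
  linarith [hQ.linearization_le_quadratic c a y]

end Convexity

theorem stmt9_general {n k : ℕ} (Q : Matrix (Fin n) (Fin n) ℝ) (hQ : Q.PosSemidef) (c : Fin n → ℝ)
    (X : Set (Fin n → ℝ)) (x : Fin k → (Fin n → ℝ))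
    (Ck : Set (Fin n → ℝ))
    (hCk : Ck = {y | ∀ i : Fin k, ((2 : ℝ) • (Q *ᵥ x i) + c) ⬝ᵥ (y - x i) ≤ 0})
    (xk : Fin n → ℝ)
    (hmin : ∀ y ∈ X ∩ Ck, xk ⬝ᵥ (Q *ᵥ xk) + c ⬝ᵥ xk ≤ y ⬝ᵥ (Q *ᵥ y) + c ⬝ᵥ y)
    (hdec : ∀ i : Fin k,
      xk ⬝ᵥ (Q *ᵥ xk) + c ⬝ᵥ xk ≤ (x i) ⬝ᵥ (Q *ᵥ x i) + c ⬝ᵥ x i) :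
    ∀ y ∈ X, xk ⬝ᵥ (Q *ᵥ xk) + c ⬝ᵥ xk ≤ y ⬝ᵥ (Q *ᵥ y) + c ⬝ᵥ y := by
  intro y hy
  by_cases hyC : y ∈ Ck
  · exact hmin y ⟨hy, hyC⟩
  · obtain ⟨i, hcut⟩ : ∃ i, 0 < ((2 : ℝ) • (Q *ᵥ x i) + c) ⬝ᵥ (y - x i) := by
      simpa [hCk] using hyC
    exact (hdec i).trans (hQ.quadratic_lt_of_gradient_dotProduct_pos c (x i) y hcut).le

/-- Correctness of the shrinking cuts (Proposition 4): if `x_k` minimizes `f`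
over `X ∩ C_k`, where `C_k` is the intersection of the shrinking cuts generated
at `x₀, …, x_{k-1}`, and `f(x_k) ≤ f(xᵢ)` for all `i`, then `x_k` minimizes `f`
over the whole set `X`. -/
theorem stmt9 {n k : ℕ} (Q : Matrix (Fin n) (Fin n) ℝ) (hQ : Q.PosSemidef) (c : Fin n → ℝ)
    (X : Set (Fin n → ℝ)) (x : Fin k → (Fin n → ℝ))
    (Ck : Set (Fin n → ℝ))
    (hCk : Ck = {y | ∀ i : Fin k, ((2 : ℝ) • (Q *ᵥ x i) + c) ⬝ᵥ (y - x i) ≤ 0})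
    (xk : Fin n → ℝ) (hxk : xk ∈ X ∩ Ck)
    (hmin : ∀ y ∈ X ∩ Ck, xk ⬝ᵥ (Q *ᵥ xk) + c ⬝ᵥ xk ≤ y ⬝ᵥ (Q *ᵥ y) + c ⬝ᵥ y)
    (hdec : ∀ i : Fin k,
      xk ⬝ᵥ (Q *ᵥ xk) + c ⬝ᵥ xk ≤ (x i) ⬝ᵥ (Q *ᵥ x i) + c ⬝ᵥ x i) :
    ∀ y ∈ X, xk ⬝ᵥ (Q *ᵥ xk) + c ⬝ᵥ xk ≤ y ⬝ᵥ (Q *ᵥ y) + c ⬝ᵥ y :=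
  stmt9_general Q hQ c X x Ck hCk xk hmin hdec
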